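/- arXiv:1301.3653 — 2 statements merged into one kernel-verified Lean document; each statement's English description precedes it below -/
import Mathlib

section
/- For all n, k ≥ 1, the higher-order tangent numbers are linear combinations of tangent numbers: T(n,k) = (1/(k! · (k−1)!)) · Σ_{r=0}^{k−1} T_{n+r} · T*(k, r+1), where T_m are the tangent numbers and T*(n,k) the higher-order arctangent numbers. -/
open Real Finset

/-- Tangent numbers: tan t = Σ Tₙ tⁿ/n!. -/
noncomputable def tangentNumber (n : ℕ) : ℝ := iteratedDeriv n Real.tan 0

/-- Secant numbers: sec t = Σ Sₙ tⁿ/n!. -/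
noncomputable def secantNumber (n : ℕ) : ℝ := iteratedDeriv n (fun t : ℝ => 1 / Real.cos t) 0

/-- Higher-order tangent numbers: tanᵏ t / k! = Σ T(n,k) tⁿ/n!. -/
noncomputable def T (n k : ℕ) : ℝ :=
  iteratedDeriv n (fun t : ℝ => Real.tan t ^ k) 0 / (Nat.factorial k : ℝ)

/-- Higher-order secant numbers: sec t · tanᵏ t / k! = Σ S(n,k) tⁿ/n!. -/
noncomputable def S (n k : ℕ) : ℝ :=
  iteratedDeriv n (fun t : ℝ => Real.tan t ^ k / Real.cos t) 0 / (Nat.factorial k : ℝ)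

/-- Higher-order arctangent numbers: arctanᵏ t / k! = Σ T*(n,k) tⁿ/n!. -/
noncomputable def Tstar (n k : ℕ) : ℝ :=
  iteratedDeriv n (fun t : ℝ => Real.arctan t ^ k) 0 / (Nat.factorial k : ℝ)

/-- Binomial coefficient with integer lower index (0 if lower index is negative). -/
noncomputable def chooseZ (a : ℕ) (b : ℤ) : ℝ :=
  if 0 ≤ b then (a.choose b.toNat : ℝ) else 0


/-!
Under `x = tan t` the derivation `d/dt` becomes `D = (1 + x²) d/dx` on polynomials in `x`, so the
`n`-th derivative of `tanᵏ` at `0` is `(Dⁿ xᵏ)(0)` and `T_m = (Dᵐ x)(0)`. It therefore suffices to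
expand `D xᵏ` in the vectors `D^(r+1) x`: `(k-1)! D xᵏ = ∑_{r<k} T*(k, r+1) D^(r+1) x`. Both sides
satisfy the same three-term recursion in `k`: on the left it comes from
`D x^(k+1) = (k+1)(xᵏ + x^(k+2))`, on the right from differentiating
`(1 + x²) (arctan^(j+1))' = (j+1) arctanʲ` at `0` with the Leibniz rule.
-/

open Polynomial

noncomputable def tanDeriv : Module.End ℝ ℝ[X] :=
  LinearMap.mulLeft ℝ (1 + X ^ 2) ∘ₗ derivative

@[simp]
lemma tanDeriv_apply (p : ℝ[X]) : tanDeriv p = (1 + X ^ 2) * derivative p := rfl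

lemma hasDerivAt_eval_tan (p : ℝ[X]) {t : ℝ} (ht : cos t ≠ 0) :
    HasDerivAt (fun s => p.eval (tan s)) ((tanDeriv p).eval (tan t)) t := by
  refine ((p.hasDerivAt (tan t)).comp t (hasDerivAt_tan ht)).congr_deriv ?_
  rw [one_div, ← inv_one_add_tan_sq ht, inv_inv]
  simp only [tanDeriv_apply, eval_mul, eval_add, eval_one, eval_pow, eval_X]
  ring

lemma iteratedDeriv_eval_tan (n : ℕ) (p : ℝ[X]) {t : ℝ} (ht : cos t ≠ 0) :
    iteratedDeriv n (fun s => p.eval (tan s)) t = ((tanDeriv ^ n) p).eval (tan t) := by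
  induction n generalizing p with
  | zero => simp
  | succ n ih =>
    have hderiv : deriv (fun s => p.eval (tan s)) =ᶠ[nhds t]
        fun s => (tanDeriv p).eval (tan s) := by
      filter_upwards [(isOpen_ne.preimage continuous_cos).mem_nhds ht] with s hs
      exact (hasDerivAt_eval_tan p hs).deriv
    rw [iteratedDeriv_succ', hderiv.iteratedDeriv_eq, ih, pow_succ, Module.End.mul_apply]

lemma iteratedDeriv_tan_pow_zero (n k : ℕ) :
    iteratedDeriv n (fun t => tan t ^ k) 0 = ((tanDeriv ^ n) (X ^ k)).eval 0 := by
  simpa using iteratedDeriv_eval_tan n (X ^ k) (t := 0) (by simp)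

lemma tangentNumber_eq_eval (n : ℕ) : tangentNumber n = ((tanDeriv ^ n) X).eval 0 := by
  simpa [tangentNumber] using iteratedDeriv_tan_pow_zero n 1

lemma tanDeriv_X_pow_succ (k : ℕ) :
    tanDeriv (X ^ (k + 1)) = ((k + 1 : ℕ) : ℝ) • (X ^ k + X ^ (k + 2)) := by
  simp only [tanDeriv_apply, derivative_X_pow, Nat.add_sub_cancel, smul_eq_C_mul]
  ring

section IteratedDerivAtZero

variable {𝕜 : Type*} [NontriviallyNormedField 𝕜]

lemma iteratedDeriv_pow_mul_zero {g : 𝕜 → 𝕜} (p m : ℕ) (hg : ContDiffAt 𝕜 m g 0) :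
    iteratedDeriv m (fun x => x ^ p * g x) 0 =
      m.descFactorial p * iteratedDeriv (m - p) g 0 := by
  have hpow : ContDiffAt 𝕜 m (fun x : 𝕜 => x ^ p) 0 := contDiffAt_id.pow p
  rw [iteratedDeriv_fun_mul hpow hg]
  simp only [iteratedDeriv_fun_pow_zero, Nat.cast_ite, Nat.cast_zero, mul_ite, ite_mul, mul_zero,
    zero_mul, Finset.sum_ite_eq', Finset.mem_range]
  split_ifs with hpm
  · rw [Nat.descFactorial_eq_factorial_mul_choose]
    push_cast
    ring
  · rw [Nat.descFactorial_eq_zero_iff_lt.mpr (by omega), Nat.cast_zero, zero_mul]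

lemma iteratedDeriv_pow_eq_zero_of_lt {f : 𝕜 → 𝕜} {a : 𝕜} {m j : ℕ}
    (hf : ContDiffAt 𝕜 m f a) (ha : f a = 0) (hmj : m < j) :
    iteratedDeriv m (fun x => f x ^ j) a = 0 := by
  induction j generalizing m with
  | zero => omega
  | succ j ih =>
    simp_rw [pow_succ']
    rw [iteratedDeriv_fun_mul hf (hf.pow j)]
    refine Finset.sum_eq_zero fun i hi => ?_
    rw [Finset.mem_range] at hi
    rcases i with _ | i
    · simp [ha]
    · rw [ih (hf.of_le (by exact_mod_cast m.sub_le (i + 1))) (by omega), mul_zero]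

end IteratedDerivAtZero

lemma one_add_sq_mul_deriv_arctan_pow (j : ℕ) :
    (fun x => (1 + x ^ 2) * deriv (fun x => arctan x ^ (j + 1)) x) =
      fun x => (j + 1 : ℝ) * arctan x ^ j := by
  funext x
  rw [((hasDerivAt_arctan x).fun_pow (j + 1)).deriv]
  field_simp
  push_cast
  ring

lemma iteratedDeriv_arctan_pow_succ_succ (k j : ℕ) :
    iteratedDeriv (k + 2) (fun x => arctan x ^ (j + 1)) 0 +
        (k + 1) * k * iteratedDeriv k (fun x => arctan x ^ (j + 1)) 0 =
      (j + 1) * iteratedDeriv (k + 1) (fun x => arctan x ^ j) 0 := by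
  set g := deriv (fun x => arctan x ^ (j + 1))
  have hg : ContDiff ℝ (k + 1) g := (contDiff_succ_iff_deriv.mp (contDiff_arctan.pow (j + 1))).2.2
  have hsq : ContDiff ℝ (k + 1) (fun x => x ^ 2 * g x) := (contDiff_id.pow 2).mul hg
  have key : iteratedDeriv (k + 1) (fun x => g x + x ^ 2 * g x) 0 =
      (j + 1) * iteratedDeriv (k + 1) (fun x => arctan x ^ j) 0 := by
    rw [← iteratedDeriv_const_mul_field, ← one_add_sq_mul_deriv_arctan_pow]
    simp only [g, add_mul, one_mul]
  rw [iteratedDeriv_fun_add hg.contDiffAt hsq.contDiffAt,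
    iteratedDeriv_pow_mul_zero 2 _ hg.contDiffAt] at key
  rw [← key, iteratedDeriv_succ' (n := k + 1)]
  rcases k with _ | k
  · simp [g]
  · rw [iteratedDeriv_succ' (n := k)]
    simp only [g, Nat.descFactorial, Nat.add_sub_cancel]
    push_cast
    ring

lemma Tstar_succ_succ (k r : ℕ) :
    Tstar (k + 2) (r + 1) = Tstar (k + 1) r - (k + 1) * k * Tstar k (r + 1) := by
  have h := iteratedDeriv_arctan_pow_succ_succ k r
  simp only [Tstar, Nat.factorial_succ]
  push_cast
  field_simp
  linear_combination h

lemma Tstar_succ_zero (k : ℕ) : Tstar (k + 1) 0 = 0 := by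
  simp [Tstar, iteratedDeriv_const]

lemma Tstar_eq_zero_of_le {k r : ℕ} (hkr : k ≤ r) : Tstar k (r + 1) = 0 := by
  rw [Tstar, iteratedDeriv_pow_eq_zero_of_lt contDiff_arctan.contDiffAt arctan_zero
    (by omega), zero_div]

lemma Tstar_one_one : Tstar 1 1 = 1 := by
  simp [Tstar, Real.deriv_arctan]

lemma factorial_smul_tanDeriv_X_pow (k : ℕ) :
    ((k - 1).factorial : ℝ) • tanDeriv (X ^ k) =
      ∑ r ∈ range k, Tstar k (r + 1) • (tanDeriv ^ (r + 1)) X := by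
  induction k using Nat.twoStepInduction with
  | zero => simp
  | one => simp [Tstar_one_one]
  | more k ihk ihk1 =>
    set D := tanDeriv
    have hD2 : D (D (X ^ (k + 1))) = ((k + 1 : ℕ) : ℝ) • (D (X ^ k) + D (X ^ (k + 2))) := by
      rw [tanDeriv_X_pow_succ, map_smul, map_add]
    -- `k ! = k * (k - 1)!` fails at `k = 0`, where instead `D (X ^ 0) = 0`.
    have hfac : (k.factorial : ℝ) • D (X ^ k) = ((k * (k - 1).factorial : ℕ) : ℝ) • D (X ^ k) := by
      rcases k with _ | k
      · simp [D]
      · rw [Nat.add_sub_cancel, ← Nat.factorial_succ]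
    have hshift : ∑ r ∈ range (k + 2), Tstar (k + 1) r • (D ^ (r + 1)) X =
        D (∑ r ∈ range (k + 1), Tstar (k + 1) (r + 1) • (D ^ (r + 1)) X) := by
      simp only [sum_range_succ' _ (k + 1), Tstar_succ_zero, zero_smul, add_zero, map_sum,
        map_smul, pow_succ' D, Module.End.mul_apply]
    have htrunc : ∑ r ∈ range (k + 2), Tstar k (r + 1) • (D ^ (r + 1)) X =
        ∑ r ∈ range k, Tstar k (r + 1) • (D ^ (r + 1)) X := by
      rw [sum_range_succ, sum_range_succ, Tstar_eq_zero_of_le le_rfl,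
        Tstar_eq_zero_of_le k.le_succ, zero_smul, zero_smul, add_zero, add_zero]
    rw [Nat.add_sub_cancel] at ihk1
    calc (((k + 2 - 1).factorial : ℕ) : ℝ) • D (X ^ (k + 2))
        = (k.factorial : ℝ) • D (D (X ^ (k + 1))) -
            ((k + 1) * k : ℝ) • (((k - 1).factorial : ℝ) • D (X ^ k)) := by
          rw [show k + 2 - 1 = k + 1 from rfl, Nat.factorial_succ]
          push_cast at hD2 hfac ⊢
          linear_combination (norm := module) -(k.factorial : ℝ) • hD2 - ((k : ℝ) + 1) • hfac
      _ = ∑ r ∈ range (k + 2), Tstar (k + 1) r • (D ^ (r + 1)) X -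
            ((k + 1) * k : ℝ) • ∑ r ∈ range (k + 2), Tstar k (r + 1) • (D ^ (r + 1)) X := by
          rw [hshift, htrunc, ← ihk, ← ihk1, map_smul]
      _ = ∑ r ∈ range (k + 2), Tstar (k + 2) (r + 1) • (D ^ (r + 1)) X := by
          simp only [Tstar_succ_succ, sub_smul, sum_sub_distrib, smul_sum, smul_smul, mul_assoc]

lemma factorial_mul_iteratedDeriv_tan_pow_zero (n k : ℕ) :
    ((k - 1).factorial : ℝ) * iteratedDeriv (n + 1) (fun t => tan t ^ k) 0 =
      ∑ r ∈ range k, tangentNumber (n + 1 + r) * Tstar k (r + 1) := by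
  rw [iteratedDeriv_tan_pow_zero, pow_succ, Module.End.mul_apply, ← smul_eq_mul, ← eval_smul,
    ← map_smul, factorial_smul_tanDeriv_X_pow, map_sum, eval_finsetSum]
  refine sum_congr rfl fun r _ => ?_
  rw [map_smul, eval_smul, smul_eq_mul, ← Module.End.mul_apply, ← pow_add, mul_comm,
    tangentNumber_eq_eval, add_right_comm, add_assoc]

theorem stmt13_general (n k : ℕ) (hn : 1 ≤ n) :
    T n k = 1 / ((k.factorial : ℝ) * ((k - 1).factorial : ℝ)) *
      ∑ r ∈ Finset.range k, tangentNumber (n + r) * Tstar k (r + 1) := by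
  obtain ⟨n, rfl⟩ := Nat.exists_eq_add_of_le' hn
  rw [T, ← factorial_mul_iteratedDeriv_tan_pow_zero]
  field_simp

theorem stmt13 (n k : ℕ) (hn : 1 ≤ n) (hk : 1 ≤ k) :
    T n k = 1 / ((k.factorial : ℝ) * ((k - 1).factorial : ℝ)) *
      ∑ r ∈ Finset.range k, tangentNumber (n + r) * Tstar k (r + 1) :=
  stmt13_general n k hn
end

section
/- For all n ≥ 1 and k ≥ 0 with n ≡ k (mod 2), T(n,k) = (−1)^{(n−k)/2} · (−1)^n · Σ_{α=k}^{n} 2^{n−α} · L(α,k) · S2(n,α), where L(α,k) = (−1)^α · C(α−1, k−1) · α!/k! are the Lah numbers (with sign) and S2 the Stirling numbers of the second kind. -/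
open Real Finset

/-- Stirling numbers of the second kind. -/
noncomputable def stirling2 (n k : ℕ) : ℝ :=
  (1 / (k.factorial : ℝ)) *
    ∑ j ∈ Finset.range (k + 1), (-1 : ℝ) ^ (k - j) * (k.choose j : ℝ) * (j : ℝ) ^ n

/-- Signed Lah numbers L(n,k) = (−1)ⁿ C(n−1,k−1) n!/k!. -/
noncomputable def lah (a k : ℕ) : ℝ :=
  (-1 : ℝ) ^ a * chooseZ (a - 1) ((k : ℤ) - 1) * (a.factorial : ℝ) / (k.factorial : ℝ)

/-!
Differentiating `tan t ^ (k + 1)` gives `(k + 1) (tan t ^ k + tan t ^ (k + 2))`, so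
`T(n+1, k+1) = T(n, k) + (k+1)(k+2) T(n, k+2)`. The sum `A(n, k) = Σ_α 2^(n-α) L(α, k) S2(n, α)`
satisfies the same recurrence up to the sign of its first term: expand `S2(n+1, α)` by the
Stirling recurrence and regroup the coefficient of each `S2(n, α)` with the two Lah identities
`L(a+2, k+1) = -(a+k+2) L(a+1, k+1) - L(a+1, k)` and `(k+1)(k+2) L(a+1, k+2) = (a-k) L(a+1, k+1)`.
The factor `(-1)^((n-k)/2)` absorbs that sign, and induction on `n ≥ 1` concludes.
-/

open Topology
open scoped Nat

lemma hasDerivAt_tan_pow_succ (k : ℕ) {x : ℝ} (hx : cos x ≠ 0) :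
    HasDerivAt (fun t => tan t ^ (k + 1)) ((k + 1) * (tan x ^ k + tan x ^ (k + 2))) x := by
  refine ((hasDerivAt_tan hx).pow (k + 1)).congr_deriv ?_
  rw [one_div, ← inv_one_add_tan_sq hx, inv_inv]
  push_cast
  ring

lemma iteratedDeriv_succ_tan_pow_succ (n k : ℕ) {x : ℝ} (hx : cos x ≠ 0) :
    iteratedDeriv (n + 1) (fun t => tan t ^ (k + 1)) x =
      (k + 1) * (iteratedDeriv n (fun t => tan t ^ k) x +
        iteratedDeriv n (fun t => tan t ^ (k + 2)) x) := by
  have hderiv : deriv (fun t => tan t ^ (k + 1)) =ᶠ[𝓝 x]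
      fun t => (k + 1) * (tan t ^ k + tan t ^ (k + 2)) := by
    filter_upwards [continuous_cos.continuousAt.eventually_ne hx] with t ht
    exact (hasDerivAt_tan_pow_succ k ht).deriv
  have htan : ContDiffAt ℝ n tan x := contDiffAt_tan.2 hx
  rw [iteratedDeriv_succ', hderiv.iteratedDeriv_eq, iteratedDeriv_const_mul_field,
    iteratedDeriv_fun_add (htan.pow k) (htan.pow (k + 2))]

lemma T_zero_left (k : ℕ) : T 0 k = if k = 0 then 1 else 0 := by
  rcases k with _ | k <;> simp [T]

lemma T_succ_zero (n : ℕ) : T (n + 1) 0 = 0 := by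
  simp [T, iteratedDeriv_const]

lemma T_succ_succ (n k : ℕ) :
    T (n + 1) (k + 1) = T n k + (k + 1) * (k + 2) * T n (k + 2) := by
  simp only [T, iteratedDeriv_succ_tan_pow_succ n k (x := 0) (by simp), Nat.factorial_succ]
  push_cast
  field_simp
  ring

lemma neg_one_pow_mul_choose_mul_self {k j : ℕ} (hj : j ≤ k + 1) :
    (-1 : ℝ) ^ (k + 1 - j) * (k + 1).choose j * j =
      (k + 1) * ((-1) ^ (k + 1 - j) * (k + 1).choose j + (-1) ^ (k - j) * k.choose j) := by
  obtain rfl | hjk := eq_or_lt_of_le hj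
  · simp
  have hpascal : (k.choose j * (k + 1) : ℝ) = (k + 1).choose j * ((k + 1 : ℕ) - j : ℝ) := by
    rw [← Nat.cast_sub hj]
    exact_mod_cast Nat.choose_mul_succ_eq k j
  rw [show k + 1 - j = k - j + 1 by omega, pow_succ]
  push_cast at hpascal
  linear_combination -(-1 : ℝ) ^ (k - j) * hpascal

lemma factorial_mul_stirling2 (n k : ℕ) :
    k ! * stirling2 n k = ∑ j ∈ range (k + 1), (-1 : ℝ) ^ (k - j) * k.choose j * j ^ n := by
  rw [stirling2, ← mul_assoc, mul_one_div_cancel (by positivity), one_mul]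

lemma stirling2_succ_succ (n k : ℕ) :
    stirling2 (n + 1) (k + 1) = (k + 1) * stirling2 n (k + 1) + stirling2 n k := by
  have hsum : ∑ j ∈ range (k + 2), (-1 : ℝ) ^ (k - j) * k.choose j * j ^ n =
      ∑ j ∈ range (k + 1), (-1 : ℝ) ^ (k - j) * k.choose j * j ^ n := by
    simp [sum_range_succ _ (k + 1)]
  have key : (k + 1)! * stirling2 (n + 1) (k + 1) =
      (k + 1) * ((k + 1)! * stirling2 n (k + 1) + k ! * stirling2 n k) := by
    rw [factorial_mul_stirling2, factorial_mul_stirling2, factorial_mul_stirling2, ← hsum,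
      ← sum_add_distrib, mul_sum]
    refine sum_congr rfl fun j hj => ?_
    rw [pow_succ]
    linear_combination (j : ℝ) ^ n *
      neg_one_pow_mul_choose_mul_self (Nat.lt_succ_iff.1 (mem_range.1 hj))
  rw [Nat.factorial_succ] at key
  push_cast at key
  have hfact : ((k + 1) * k ! : ℝ) ≠ 0 := by positivity
  apply mul_left_cancel₀ hfact
  linear_combination key

lemma stirling2_eq_stirlingSecond (n k : ℕ) : stirling2 n k = Nat.stirlingSecond n k := by
  induction n generalizing k with
  | zero =>
    rcases k with _ | k
    · simp [stirling2]
    · have hbinom := add_pow (1 : ℝ) (-1) (k + 1)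
      simp only [add_neg_cancel, one_pow, one_mul, zero_pow k.succ_ne_zero] at hbinom
      simp only [stirling2, pow_zero, mul_one, ← hbinom, mul_zero, Nat.stirlingSecond_zero_succ,
        Nat.cast_zero]
  | succ n ih =>
    rcases k with _ | k
    · simp [stirling2]
    · rw [stirling2_succ_succ, ih, ih, Nat.stirlingSecond_succ_succ]
      push_cast
      ring

lemma cast_choose_succ_mul (a k : ℕ) :
    (a.choose (k + 1) : ℝ) * (k + 1) = a.choose k * ((a : ℝ) - k) := by
  rcases le_or_gt k a with hka | hak
  · rw [← Nat.cast_sub hka]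
    exact_mod_cast Nat.choose_succ_right_eq a k
  · simp [Nat.choose_eq_zero_of_lt hak, Nat.choose_eq_zero_of_lt (hak.trans (Nat.lt_succ_self k))]

lemma lah_zero_right (a : ℕ) : lah a 0 = 0 := by
  simp [lah, chooseZ]

lemma lah_succ_succ (a k : ℕ) :
    lah (a + 1) (k + 1) = (-1) ^ (a + 1) * a.choose k * (a + 1)! / (k + 1)! := by
  simp [lah, chooseZ]

lemma lah_succ_succ_eq_zero_of_lt {a k : ℕ} (h : a < k) : lah (a + 1) (k + 1) = 0 := by
  simp [lah_succ_succ, Nat.choose_eq_zero_of_lt h]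

lemma lah_succ_add_two (a k : ℕ) :
    (k + 1) * (k + 2) * lah (a + 1) (k + 2) = ((a : ℝ) - k) * lah (a + 1) (k + 1) := by
  rw [lah_succ_succ, lah_succ_succ, Nat.factorial_succ (k + 1)]
  push_cast
  field_simp
  linear_combination ((k : ℝ) + 2) * cast_choose_succ_mul a k

-- One step lower, at `lah 1 _`, this fails: `lah 0 1 = 1` is a junk value (`0 - 1` truncates to `0`).
lemma lah_add_two_succ (a k : ℕ) :
    lah (a + 2) (k + 1) = -((a : ℝ) + k + 2) * lah (a + 1) (k + 1) - lah (a + 1) k := by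
  rcases k with _ | m
  · simp [lah_succ_succ, lah_zero_right, Nat.factorial_succ (a + 1), pow_succ]
    ring
  · rw [lah_succ_succ, lah_succ_succ, lah_succ_succ, Nat.choose_succ_succ,
      Nat.factorial_succ (a + 1), Nat.factorial_succ (m + 1)]
    push_cast
    field_simp
    linear_combination (-1 : ℝ) ^ (a + 1) * cast_choose_succ_mul a m

lemma lah_add_two_add_two_mul_lah (b k : ℕ) :
    lah (b + 2) (k + 1) + 2 * (b + 1) * lah (b + 1) (k + 1) =
      -lah (b + 1) k + (k + 1) * (k + 2) * lah (b + 1) (k + 2) := by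
  linear_combination lah_add_two_succ b k - lah_succ_add_two b k

lemma stirling2_succ_zero (n : ℕ) : stirling2 (n + 1) 0 = 0 := by
  simp [stirling2_eq_stirlingSecond]

lemma stirling2_eq_zero_of_lt {n k : ℕ} (h : n < k) : stirling2 n k = 0 := by
  simp [stirling2_eq_stirlingSecond, Nat.stirlingSecond_eq_zero_of_lt h]

noncomputable def lahStirlingSum (n k : ℕ) : ℝ :=
  ∑ α ∈ Icc k n, 2 ^ (n - α) * lah α k * stirling2 n α

lemma lahStirlingSum_eq_zero_of_lt {n k : ℕ} (h : n < k) : lahStirlingSum n k = 0 := by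
  simp [lahStirlingSum, Icc_eq_empty_of_lt h]

lemma lahStirlingSum_zero_right (n : ℕ) : lahStirlingSum n 0 = 0 := by
  simp [lahStirlingSum, lah_zero_right]

lemma lahStirlingSum_one_succ (k : ℕ) : lahStirlingSum 1 (k + 1) = if k = 0 then -1 else 0 := by
  rcases k with _ | k
  · simp [lahStirlingSum, lah_succ_succ, stirling2, sum_range_succ]
  · exact lahStirlingSum_eq_zero_of_lt (by omega)

lemma lahStirlingSum_succ_eq (n k : ℕ) :
    lahStirlingSum (n + 1) k =
      ∑ β ∈ range (n + 1), 2 ^ (n - β) * lah (β + 1) k * stirling2 (n + 1) (β + 1) := by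
  have hextend : lahStirlingSum (n + 1) k =
      ∑ α ∈ range (n + 2), 2 ^ (n + 1 - α) * lah α k * stirling2 (n + 1) α := by
    refine sum_subset (fun α hα => mem_range.2 (by grind)) fun α hα hαk => ?_
    rcases α with _ | a
    · simp [stirling2_succ_zero]
    rcases k with _ | m
    · grind
    · simp [lah_succ_succ_eq_zero_of_lt (by grind : a < m)]
  simp [hextend, sum_range_succ' _ (n + 1), stirling2_succ_zero]

lemma lahStirlingSum_succ_succ {n : ℕ} (hn : n ≠ 0) (k : ℕ) :
    lahStirlingSum (n + 1) (k + 1) =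
      -lahStirlingSum n k + (k + 1) * (k + 2) * lahStirlingSum n (k + 2) := by
  obtain ⟨m, rfl⟩ := Nat.exists_eq_succ_of_ne_zero hn
  simp only [lahStirlingSum_succ_eq, stirling2_succ_succ (m + 1), mul_add, sum_add_distrib]
  rw [sum_range_succ _ (m + 1), sum_range_succ' _ (m + 1)]
  simp only [stirling2_eq_zero_of_lt (Nat.lt_succ_self (m + 1)), stirling2_succ_zero, mul_zero,
    add_zero, mul_sum, ← sum_neg_distrib, ← sum_add_distrib]
  refine sum_congr rfl fun β hβ => ?_
  rw [show m + 1 - β = m - β + 1 by grind, pow_succ]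
  push_cast
  linear_combination (2 ^ (m - β) * stirling2 (m + 1) (β + 1)) * lah_add_two_add_two_mul_lah β k

lemma T_one_succ (k : ℕ) : T 1 (k + 1) = if k = 0 then 1 else 0 := by
  rcases k with _ | k <;> simp [T_succ_succ, T_zero_left]

theorem stmt16 (n k : ℕ) (hn : 1 ≤ n) (hpar : n % 2 = k % 2) :
    T n k = (-1 : ℝ) ^ ((n - k) / 2) * (-1 : ℝ) ^ n *
      ∑ α ∈ Finset.Icc k n, (2 : ℝ) ^ (n - α) * lah α k * stirling2 n α := by
  change T n k = _ * lahStirlingSum n k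
  induction n, hn using Nat.le_induction generalizing k with
  | base =>
    obtain ⟨j, rfl⟩ := Nat.exists_eq_succ_of_ne_zero (show k ≠ 0 by omega)
    rcases j with _ | j <;> simp [T_one_succ, lahStirlingSum_one_succ]
  | succ n hn ih =>
    rcases k with _ | j
    · simp [T_succ_zero, lahStirlingSum_zero_right]
    rw [T_succ_succ, ih j (by omega), ih (j + 2) (by omega),
      lahStirlingSum_succ_succ (by omega), show n + 1 - (j + 1) = n - j by omega]
    rcases lt_or_ge n (j + 2) with hlt | hle
    · simp only [lahStirlingSum_eq_zero_of_lt hlt]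
      ring
    · have hsign : (-1 : ℝ) ^ ((n - j) / 2) = -(-1) ^ ((n - (j + 2)) / 2) := by
        rw [show (n - j) / 2 = (n - (j + 2)) / 2 + 1 by omega, pow_succ, mul_neg_one]
      rw [hsign]
      ring
end
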